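/- Let (R,m) be a Noetherian local ring, J an ideal, and let L ⊆ N ⊆ M be Artinian R-modules such that J•((L :_N m) :_M J) ⊆ L. Then (L :_M J) = (N :_M J), and hence J•(L :_M J) = J•(N :_M J). (That is, the J-basically empty interior is a Nakayama interior.) -/

import Mathlib

/-- The colon submodule `(L :_M J) = {x ∈ M : J • x ⊆ L}`. -/
def Submodule.icolon {R M : Type*} [CommRing R] [AddCommGroup M] [Module R M]
    (L : Submodule R M) (J : Ideal R) : Submodule R M where
  carrier := {x | ∀ r ∈ J, r • x ∈ L}
  add_mem' := fun {a b} ha hb r hr => by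
    rw [smul_add]; exact L.add_mem (ha r hr) (hb r hr)
  zero_mem' := fun r hr => by simp
  smul_mem' := fun c x hx r hr => by
    rw [smul_comm]; exact L.smul_mem c (hx r hr)

/-!
If `(L :_M J) ⊊ (N :_M J)`, the socle of the nonzero Artinian module `(N :_M J) / (L :_M J)`
provides `x ∈ (N :_M J) \ (L :_M J)` with `m • x ⊆ (L :_M J)`. Then `J • x` lies in
`(L :_N m)`, so `x ∈ ((L :_N m) :_M J)` and the hypothesis forces `J • x ⊆ L`, a contradiction.
-/

open IsLocalRing

namespace Submodule

variable {R M : Type*} [CommRing R] [AddCommGroup M] [Module R M]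

theorem icolon_mono {L N : Submodule R M} (hLN : L ≤ N) (J : Ideal R) :
    L.icolon J ≤ N.icolon J :=
  fun _ hx r hr => hLN (hx r hr)

theorem smul_le_iff_le_icolon {J : Ideal R} {X L : Submodule R M} :
    J • X ≤ L ↔ X ≤ L.icolon J :=
  ⟨fun h _ hx _ hr => h (smul_mem_smul hr hx), fun h => smul_le.2 fun r hr _ hx => h hx r hr⟩

theorem icolon_comm (L : Submodule R M) (I J : Ideal R) :
    (L.icolon I).icolon J = (L.icolon J).icolon I := by
  ext x
  exact ⟨fun hx r hr s hs => smul_comm r s x ▸ hx s hs r hr,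
    fun hx s hs r hr => smul_comm s r x ▸ hx r hr s hs⟩

theorem inf_icolon (A B : Submodule R M) (J : Ideal R) :
    (A ⊓ B).icolon J = A.icolon J ⊓ B.icolon J := by
  ext x
  exact ⟨fun hx => ⟨fun r hr => (hx r hr).1, fun r hr => (hx r hr).2⟩,
    fun hx r hr => ⟨hx.1 r hr, hx.2 r hr⟩⟩

variable [IsLocalRing R] [IsArtinian R M]

/-- An atom of the submodule lattice is a simple module, whose annihilator is the maximal ideal. -/
theorem exists_mem_ne_zero_maximalIdeal_smul_eq_zero {K : Submodule R M} (hK : K ≠ ⊥) :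
    ∃ x ∈ K, x ≠ 0 ∧ ∀ r ∈ maximalIdeal R, r • x = 0 := by
  obtain ⟨S, hS, hSK⟩ := (eq_bot_or_exists_atom_le K).resolve_left hK
  have : IsSimpleModule R S := isSimpleModule_iff_isAtom.2 hS
  have := IsSimpleModule.nontrivial R S
  obtain ⟨⟨x, hxS⟩, hx0⟩ := exists_ne (0 : S)
  have hker := eq_maximalIdeal (IsSimpleModule.ker_toSpanSingleton_isMaximal R hx0)
  refine ⟨x, hSK hxS, fun h => hx0 (Subtype.ext h), fun r hr => ?_⟩
  rw [← hker] at hr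
  exact congrArg Subtype.val (LinearMap.mem_ker.1 hr)

theorem le_of_inf_icolon_maximalIdeal_le {P K : Submodule R M}
    (h : K ⊓ P.icolon (maximalIdeal R) ≤ P) : K ≤ P := by
  by_contra hKP
  have hK : K.map P.mkQ ≠ ⊥ := by rwa [Ne, ← LinearMap.le_ker_iff_map, ker_mkQ]
  obtain ⟨_, ⟨x, hxK, rfl⟩, hx0, hsoc⟩ := exists_mem_ne_zero_maximalIdeal_smul_eq_zero hK
  have hxm : x ∈ P.icolon (maximalIdeal R) := fun r hr =>
    (Quotient.mk_eq_zero P).1 (by simpa only [mkQ_apply, ← Quotient.mk_smul] using hsoc r hr)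
  exact hx0 ((Quotient.mk_eq_zero P).2 (h ⟨hxK, hxm⟩))

end Submodule

open Submodule in
theorem jbe_nakayama_general {R M : Type*} [CommRing R] [IsLocalRing R]
    [AddCommGroup M] [Module R M] [IsArtinian R M]
    (J : Ideal R) (L N : Submodule R M) (hLN : L ≤ N)
    (h : J • (((L.icolon (IsLocalRing.maximalIdeal R)) ⊓ N).icolon J) ≤ L) :
    L.icolon J = N.icolon J ∧ J • (L.icolon J) = J • (N.icolon J) := by
  have hsocle : N.icolon J ⊓ (L.icolon J).icolon (maximalIdeal R) ≤ L.icolon J := by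
    rwa [inf_comm, ← icolon_comm, ← inf_icolon, ← smul_le_iff_le_icolon]
  have heq : L.icolon J = N.icolon J :=
    le_antisymm (icolon_mono hLN J) (le_of_inf_icolon_maximalIdeal_le hsocle)
  exact ⟨heq, by rw [heq]⟩

/-- The J-basically empty interior is a Nakayama interior on Artinian modules
over a Noetherian local ring. -/
theorem jbe_nakayama {R M : Type*} [CommRing R] [IsNoetherianRing R] [IsLocalRing R]
    [AddCommGroup M] [Module R M] [IsArtinian R M]
    (J : Ideal R) (L N : Submodule R M) (hLN : L ≤ N)
    (h : J • (((L.icolon (IsLocalRing.maximalIdeal R)) ⊓ N).icolon J) ≤ L) :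
    L.icolon J = N.icolon J ∧ J • (L.icolon J) = J • (N.icolon J) :=
  jbe_nakayama_general J L N hLN h
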